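/- Let Σ be symmetric positive definite and P have orthonormal columns. For any x ∈ ℝ^p, the projected Mahalanobis quadratic form is bounded by the full one: (x−μ) P (P^T Σ P)⁻¹ P^T (x−μ)^T ≤ (x−μ) Σ⁻¹ (x−μ)^T. -/

import Mathlib

/-!
The block matrix `[[Pᴴ S P, Pᴴ], [P, S⁻¹]]` is the Gram matrix of the columns of `[P | S⁻¹]` for
the inner product given by `S`, hence positive semidefinite. Its Schur complement with respect to
the invertible block `Pᴴ S P` is `S⁻¹ - P (Pᴴ S P)⁻¹ Pᴴ`, which is therefore positive
semidefinite as well; evaluating this quadratic form at `x - μ` gives the inequality.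
-/

open Matrix

namespace Matrix

variable {m n : Type*} [Fintype m] [Fintype n] [DecidableEq m]

theorem mulVec_injective_of_mul_eq_one {R : Type*} [Semiring R] {A : Matrix n m R}
    {B : Matrix m n R} (h : B * A = 1) : Function.Injective A.mulVec :=
  Function.LeftInverse.injective (g := B.mulVec) fun v => by rw [mulVec_mulVec, h, one_mulVec]

variable [DecidableEq n]
  {K : Type*} [Field K] [PartialOrder K] [StarRing K] [StarOrderedRing K]

theorem PosDef.posSemidef_inv_sub_mul_inv_conjTranspose_mul_mul_same {S : Matrix n n K}
    (hS : S.PosDef) {P : Matrix n m K} (hP : Function.Injective P.mulVec) :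
    (S⁻¹ - P * (Pᴴ * S * P)⁻¹ * Pᴴ).PosSemidef := by
  have hB := hS.conjTranspose_mul_mul_same hP
  have := hB.isUnit.invertible
  have := hS.isUnit.invertible
  have hgram :
      (fromCols P S⁻¹)ᴴ * S * fromCols P S⁻¹ = fromBlocks (Pᴴ * S * P) Pᴴ Pᴴᴴ S⁻¹ := by
    rw [conjTranspose_fromCols_eq_fromRows_conjTranspose, fromRows_mul, fromRows_mul_fromCols,
      hS.inv.isHermitian.eq, inv_mul_of_invertible, Matrix.mul_assoc Pᴴ S S⁻¹,
      mul_inv_of_invertible, Matrix.one_mul, Matrix.one_mul, Matrix.mul_one,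
      conjTranspose_conjTranspose]
  have hschur := (PosDef.fromBlocks₁₁ Pᴴ S⁻¹ hB).mp
    (hgram ▸ hS.posSemidef.conjTranspose_mul_mul_same _)
  rwa [conjTranspose_conjTranspose] at hschur

end Matrix

theorem projected_quadratic_form_le_full {p : ℕ}
    (S : Matrix (Fin p) (Fin p) ℝ) (hS : S.PosDef)
    (μ x : Fin p → ℝ)
    (P : Matrix (Fin p) (Fin 2) ℝ) (hP : Pᵀ * P = 1) :
    Matrix.vecMul (x - μ) (P * (Pᵀ * S * P)⁻¹ * Pᵀ) ⬝ᵥ (x - μ) ≤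
      Matrix.vecMul (x - μ) S⁻¹ ⬝ᵥ (x - μ) := by
  have h := (hS.posSemidef_inv_sub_mul_inv_conjTranspose_mul_mul_same
    (mulVec_injective_of_mul_eq_one hP)).dotProduct_mulVec_nonneg (x - μ)
  rw [conjTranspose_eq_transpose_of_trivial, star_trivial, sub_mulVec, dotProduct_sub,
    sub_nonneg] at h
  simpa only [dotProduct_mulVec] using h
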